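/- arXiv:2003.11285 — 3 statements merged into one kernel-verified Lean document; each statement's English description precedes it below -/
import Mathlib

section
/- Let p, q : α → ℝ be probability densities with respect to μ, positive a.e., and let D : α → ℝ be any measurable function. Then ∫ [p(x)·exp(1 − D(x)) + q(x)·exp(D(x))] dμ(x) ≥ 2√e·∫ √(p(x)·q(x)) dμ(x), with equality when D(x) = 1/2 + (1/2)·ln(p(x)/q(x)) a.e. -/
open MeasureTheory

lemma amgm13 (x y : ℝ) (hx : 0 ≤ x) (hy : 0 ≤ y) : 2 * Real.sqrt (x * y) ≤ x + y := by
  nlinarith [Real.sq_sqrt hx, Real.sq_sqrt hy, Real.sqrt_nonneg x, Real.sqrt_nonneg y,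
    sq_nonneg (Real.sqrt x - Real.sqrt y), Real.sqrt_mul hx y]

lemma key13 (a b u : ℝ) (ha : 0 < a) (hb : 0 < b) :
    2 * Real.sqrt (Real.exp 1) * Real.sqrt (a * b) ≤ a * Real.exp (1 - u) + b * Real.exp u := by
  have he : Real.exp (1 - u) * Real.exp u = Real.exp 1 := by
    rw [← Real.exp_add]; norm_num
  have h1 : (a * Real.exp (1 - u)) * (b * Real.exp u) = Real.exp 1 * (a * b) := by
    linear_combination a * b * he
  have h2 := amgm13 (a * Real.exp (1 - u)) (b * Real.exp u)
    (by positivity) (by positivity)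
  rw [h1, Real.sqrt_mul (Real.exp_pos 1).le, ← mul_assoc] at h2
  exact h2

lemma expsqrt13 (t : ℝ) (ht : 0 < t) : Real.exp (1/2 * Real.log t) = Real.sqrt t := by
  have : Real.exp (1/2 * Real.log t) * Real.exp (1/2 * Real.log t) = t := by
    rw [← Real.exp_add]
    rw [show 1/2 * Real.log t + 1/2 * Real.log t = Real.log t by ring, Real.exp_log ht]
  conv_rhs => rw [← this, Real.sqrt_mul_self (Real.exp_pos _).le]

lemma exphalf13 : Real.exp (1/2 : ℝ) = Real.sqrt (Real.exp 1) := by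
  have : Real.exp (1/2 : ℝ) * Real.exp (1/2 : ℝ) = Real.exp 1 := by
    rw [← Real.exp_add]; norm_num
  rw [← this, Real.sqrt_mul_self (Real.exp_pos _).le]

lemma keyeq13 (a b : ℝ) (ha : 0 < a) (hb : 0 < b) :
    a * Real.exp (1 - (1/2 + 1/2 * Real.log (a/b))) + b * Real.exp (1/2 + 1/2 * Real.log (a/b))
      = 2 * Real.sqrt (Real.exp 1) * Real.sqrt (a * b) := by
  have hab : 0 < a / b := div_pos ha hb
  have hba : 0 < b / a := div_pos hb ha
  have h1 : (1 : ℝ) - (1/2 + 1/2 * Real.log (a/b)) = 1/2 + 1/2 * Real.log (b/a) := by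
    have : Real.log (b/a) = - Real.log (a/b) := by rw [← Real.log_inv, inv_div]
    rw [this]; ring
  rw [h1, Real.exp_add, Real.exp_add, expsqrt13 _ hba, expsqrt13 _ hab, exphalf13]
  have hsa := Real.sq_sqrt ha.le
  have hsb := Real.sq_sqrt hb.le
  have hane : Real.sqrt a ≠ 0 := ne_of_gt (Real.sqrt_pos.mpr ha)
  have hbne : Real.sqrt b ≠ 0 := ne_of_gt (Real.sqrt_pos.mpr hb)
  have h2 : a * Real.sqrt (b / a) = Real.sqrt (a * b) := by
    rw [Real.sqrt_div hb.le, Real.sqrt_mul ha.le]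
    field_simp
    linear_combination (-1) * hsa
  have h3 : b * Real.sqrt (a / b) = Real.sqrt (a * b) := by
    rw [Real.sqrt_div ha.le, Real.sqrt_mul ha.le]
    field_simp
    linear_combination (-1) * hsb
  linear_combination Real.sqrt (Real.exp 1) * h2 + Real.sqrt (Real.exp 1) * h3

theorem stmt_13 {α : Type*} [MeasurableSpace α] (μ : Measure α)
    (p q : α → ℝ) (hp : Measurable p) (hq : Measurable q)
    (hp0 : ∀ᵐ x ∂μ, 0 < p x) (hq0 : ∀ᵐ x ∂μ, 0 < q x)
    (hpi : Integrable p μ) (hqi : Integrable q μ)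
    (hp1 : ∫ x, p x ∂μ = 1) (hq1 : ∫ x, q x ∂μ = 1)
    (hbc : Integrable (fun x => Real.sqrt (p x * q x)) μ)
    (D : α → ℝ) (hD : Measurable D)
    (hint : Integrable (fun x => p x * Real.exp (1 - D x) + q x * Real.exp (D x)) μ) :
    2 * Real.sqrt (Real.exp 1) * (∫ x, Real.sqrt (p x * q x) ∂μ) ≤
      ∫ x, p x * Real.exp (1 - D x) + q x * Real.exp (D x) ∂μ ∧
    (D =ᵐ[μ] (fun x => 1/2 + 1/2 * Real.log (p x / q x)) →
      (∫ x, p x * Real.exp (1 - D x) + q x * Real.exp (D x) ∂μ) =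
        2 * Real.sqrt (Real.exp 1) * ∫ x, Real.sqrt (p x * q x) ∂μ) := by
  constructor
  · rw [← MeasureTheory.integral_const_mul]
    refine integral_mono_ae (hbc.const_mul _) hint ?_
    filter_upwards [hp0, hq0] with x hpx hqx
    exact key13 _ _ _ hpx hqx
  · intro hDae
    have heq : (fun x => p x * Real.exp (1 - D x) + q x * Real.exp (D x))
        =ᵐ[μ] fun x => 2 * Real.sqrt (Real.exp 1) * Real.sqrt (p x * q x) := by
      filter_upwards [hp0, hq0, hDae] with x hpx hqx hDx
      rw [hDx]
      exact keyeq13 _ _ hpx hqx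
    rw [integral_congr_ae heq, MeasureTheory.integral_const_mul]
end

section
/- Let 0 < p < 1/2, γ > 1/2, and let ε → 0 with q = p + ε·p^γ. Then the exact rare-event proportion Υ_MIM(ε) = √(p·q)/(√(p·q) + √((1−p)(1−q))) admits the expansion Υ_MIM(ε) = [ (p+q)/2 − (1/8)ε²·p^{2γ−1} + o(ε²) ] / [ 1 − (1/8)ε²·p^{2γ−1}/(1−p) + o(ε²) ]. -/
open Filter Topology Asymptotics

lemma sqrt_taylor2 (c : ℝ) :
    (fun x : ℝ => Real.sqrt (1 + c*x) - (1 + c*x/2 - (c*x)^2/8)) =o[𝓝 (0:ℝ)]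
      (fun x => x^2) := by
  set h : ℝ → ℝ := fun x =>
    c^3*(8-c*x)/(64*(Real.sqrt (1+c*x)+(1+c*x/2-(c*x)^2/8))) with hh
  have key : (fun x : ℝ => x^3 * h x) =o[𝓝 (0:ℝ)] (fun x => x^2) := by
    have h1 : (fun x:ℝ => x^3) =o[𝓝 (0:ℝ)] (fun x => x^2) := isLittleO_pow_pow (by norm_num)
    have hden : Continuous (fun x:ℝ => 64*(Real.sqrt (1+c*x)+(1+c*x/2-(c*x)^2/8))) := by
      continuity
    have hcont : ContinuousAt h 0 := by
      apply ContinuousAt.div (by fun_prop) hden.continuousAt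
      simp [Real.sqrt_one]
    have h2 : h =O[𝓝 (0:ℝ)] (fun _ => (1:ℝ)) := hcont.tendsto.isBigO_one ℝ
    simpa using h1.mul_isBigO h2
  refine key.congr' ?_ EventuallyEq.rfl
  have hev : ∀ᶠ x in 𝓝 (0:ℝ), |c*x| < 1/2 := by
    have : Tendsto (fun x : ℝ => |c*x|) (𝓝 0) (𝓝 0) := by
      have hc : Continuous (fun x : ℝ => |c*x|) := (continuous_const.mul continuous_id).abs
      simpa using hc.tendsto 0
    exact this.eventually_lt_const (by norm_num)
  filter_upwards [hev] with x hx
  have ht1 : -(1/2) < c*x := by cases abs_lt.1 hx; linarith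
  have ht2 : c*x < 1/2 := (abs_lt.1 hx).2
  have h0 : (0:ℝ) ≤ 1 + c*x := by linarith
  set s := Real.sqrt (1+c*x) with hs
  have hs0 : 0 ≤ s := Real.sqrt_nonneg _
  have hs2 : s^2 = 1 + c*x := Real.sq_sqrt h0
  have hb : (0:ℝ) < 1 + c*x/2 - (c*x)^2/8 := by nlinarith
  have hd' : 64*(s + (1 + c*x/2 - (c*x)^2/8)) ≠ 0 := by positivity
  show x^3 * (c^3*(8-c*x)/(64*(s+(1+c*x/2-(c*x)^2/8)))) = s - (1 + c*x/2 - (c*x)^2/8)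
  rw [mul_div_assoc', div_eq_iff hd']
  linear_combination (-64:ℝ)*hs2

theorem stmt_16 (p γ : ℝ) (hp0 : 0 < p) (hp : p < 1/2) (hγ : 1/2 < γ) :
    ∃ δ > 0, ∃ r₁ r₂ : ℝ → ℝ,
      (r₁ =o[𝓝 (0 : ℝ)] fun ε => ε ^ 2) ∧
      (r₂ =o[𝓝 (0 : ℝ)] fun ε => ε ^ 2) ∧
      ∀ ε : ℝ, |ε| < δ →
        (let q := p + ε * p ^ γ;
          Real.sqrt (p * q) /
            (Real.sqrt (p * q) + Real.sqrt ((1 - p) * (1 - q)))) =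
        ((p + (p + ε * p ^ γ)) / 2 - (1/8) * ε ^ 2 * p ^ (2 * γ - 1) + r₁ ε) /
          (1 - (1/8) * ε ^ 2 * p ^ (2 * γ - 1) / (1 - p) + r₂ ε) := by
  have hp1 : (0:ℝ) < 1 - p := by linarith
  set c : ℝ := p ^ (γ - 1) with hc
  set c' : ℝ := -(p ^ γ / (1 - p)) with hc'
  have hpγ : p ^ γ = p * c := by
    have h : p ^ γ = p ^ ((γ-1)+(1:ℝ)) := by norm_num
    rw [h, Real.rpow_add hp0, Real.rpow_one, hc]; ring
  have h2γ : p ^ (2*γ - 1) = p * c^2 := by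
    have : p ^ (2*γ-1) = p ^ ((1:ℝ) + (γ-1) + (γ-1)) := by ring_nf
    rw [this, Real.rpow_add hp0, Real.rpow_add hp0, Real.rpow_one, hc]
    ring
  refine ⟨1, one_pos,
    (fun ε => p * (Real.sqrt (1+c*ε) - (1+c*ε/2-(c*ε)^2/8))),
    (fun ε => p * (Real.sqrt (1+c*ε) - (1+c*ε/2-(c*ε)^2/8))
      + (1-p) * (Real.sqrt (1+c'*ε) - (1+c'*ε/2-(c'*ε)^2/8))),
    (sqrt_taylor2 c).const_mul_left p,
    ((sqrt_taylor2 c).const_mul_left p).add ((sqrt_taylor2 c').const_mul_left (1-p)),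
    ?_⟩
  intro ε _
  have hN : Real.sqrt (p*(p+ε*p^γ)) = p * Real.sqrt (1+c*ε) := by
    have : p*(p+ε*p^γ) = p^2*(1+c*ε) := by rw [hpγ]; ring
    rw [this, Real.sqrt_mul (sq_nonneg p), Real.sqrt_sq hp0.le]
  have hM : Real.sqrt ((1-p)*(1-(p+ε*p^γ))) = (1-p) * Real.sqrt (1+c'*ε) := by
    have : (1-p)*(1-(p+ε*p^γ)) = (1-p)^2*(1+c'*ε) := by
      rw [hc']; field_simp; ring
    rw [this, Real.sqrt_mul (sq_nonneg _), Real.sqrt_sq hp1.le]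
  show Real.sqrt (p*(p+ε*p^γ)) / (Real.sqrt (p*(p+ε*p^γ)) + Real.sqrt ((1-p)*(1-(p+ε*p^γ)))) = _
  rw [hN, hM]
  beta_reduce
  congr 1
  · rw [hpγ, h2γ]; ring
  · rw [h2γ, hc', hpγ]
    field_simp
    ring
end

section
/- For any probability densities p, q on a measure space with p, q > 0 a.e., the function F(λ) = ∫ [p·exp(1 − (D₀ + λ·h)) + q·exp(D₀ + λ·h)] dμ, for measurable bounded h and D₀(x) = 1/2 + (1/2)·ln(p(x)/q(x)), satisfies F'(0) = 0 and F''(λ) ≥ 0 for all λ (whenever the integrals are finite); hence D₀ is a global minimizer of the MIM objective over discriminators. -/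
open MeasureTheory

theorem stmt_19 {α : Type*} [MeasurableSpace α] (μ : Measure α)
    (p q : α → ℝ) (hp : Measurable p) (hq : Measurable q)
    (hp0 : ∀ᵐ x ∂μ, 0 < p x) (hq0 : ∀ᵐ x ∂μ, 0 < q x)
    (hpi : Integrable p μ) (hqi : Integrable q μ)
    (hp1 : ∫ x, p x ∂μ = 1) (hq1 : ∫ x, q x ∂μ = 1)
    (h : α → ℝ) (hh : Measurable h) (C : ℝ) (hhb : ∀ x, |h x| ≤ C)
    (D₀ : α → ℝ) (hD₀ : D₀ = fun x => 1/2 + 1/2 * Real.log (p x / q x))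
    (F : ℝ → ℝ)
    (hF : F = fun l => ∫ x, p x * Real.exp (1 - (D₀ x + l * h x)) +
      q x * Real.exp (D₀ x + l * h x) ∂μ)
    (hint : ∀ l : ℝ, Integrable (fun x =>
      p x * Real.exp (1 - (D₀ x + l * h x)) +
        q x * Real.exp (D₀ x + l * h x)) μ) :
    deriv F 0 = 0 ∧ (∀ l : ℝ, 0 ≤ deriv (deriv F) l) ∧ (∀ l : ℝ, F 0 ≤ F l) := by
  -- nonemptiness, hence 0 ≤ C
  have hα : Nonempty α := by
    by_contra hne
    have hE : IsEmpty α := not_nonempty_iff.mp hne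
    rw [Measure.eq_zero_of_isEmpty μ] at hp1
    simp at hp1
  have C0 : 0 ≤ C := le_trans (abs_nonneg _) (hhb (Classical.arbitrary α))
  have hDmeas : Measurable D₀ := by
    rw [hD₀]
    exact measurable_const.add (((hp.div hq).log).const_mul _)
  -- the key pointwise identity
  have key : ∀ᵐ x ∂μ, p x * Real.exp (1 - D₀ x) = q x * Real.exp (D₀ x) := by
    filter_upwards [hp0, hq0] with x hpx hqx
    have hr : 0 < p x / q x := div_pos hpx hqx
    have hlog : Real.exp (Real.log (p x / q x)) = p x / q x := Real.exp_log hr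
    rw [hD₀]
    set L := Real.log (p x / q x) with hL
    have e1 : Real.exp (1/2 + 1/2 * L) = Real.exp (1 - (1/2 + 1/2 * L)) * Real.exp L := by
      rw [← Real.exp_add]; ring_nf
    rw [e1, hL, hlog]
    field_simp
  subst hF
  -- measurability of integrands
  have hEm : ∀ l : ℝ, Measurable (fun x => D₀ x + l * h x) := fun l =>
    hDmeas.add (hh.const_mul l)
  have hfm : ∀ l : ℝ, Measurable (fun x =>
      p x * Real.exp (1 - (D₀ x + l * h x)) + q x * Real.exp (D₀ x + l * h x)) := fun l =>
    (hp.mul (measurable_const.sub (hEm l)).exp).add (hq.mul (hEm l).exp)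
  have hfmeas : ∀ l : ℝ, AEStronglyMeasurable (fun x =>
      p x * Real.exp (1 - (D₀ x + l * h x)) + q x * Real.exp (D₀ x + l * h x)) μ := fun l =>
    (hfm l).aestronglyMeasurable
  have hf1meas : ∀ l : ℝ, AEStronglyMeasurable (fun x =>
      h x * (q x * Real.exp (D₀ x + l * h x) - p x * Real.exp (1 - (D₀ x + l * h x)))) μ :=
    fun l => (hh.mul ((hq.mul (hEm l).exp).sub
      (hp.mul (measurable_const.sub (hEm l)).exp))).aestronglyMeasurable
  have hf2meas : ∀ l : ℝ, AEStronglyMeasurable (fun x =>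
      h x ^ 2 * (p x * Real.exp (1 - (D₀ x + l * h x)) + q x * Real.exp (D₀ x + l * h x))) μ :=
    fun l => ((hh.pow_const 2).mul (hfm l)).aestronglyMeasurable
  -- domination
  have hdom : ∀ l₀ l : ℝ, l ∈ Metric.ball l₀ 1 → ∀ x, 0 ≤ p x → 0 ≤ q x →
      p x * Real.exp (1 - (D₀ x + l * h x)) + q x * Real.exp (D₀ x + l * h x) ≤
      Real.exp C * (p x * Real.exp (1 - (D₀ x + l₀ * h x)) + q x * Real.exp (D₀ x + l₀ * h x)) := by
    intro l₀ l hl x hpx hqx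
    have hball : |l - l₀| < 1 := by
      simpa [Real.dist_eq] using hl
    have habs : |(l - l₀) * h x| ≤ C := by
      rw [abs_mul]
      calc |l - l₀| * |h x| ≤ 1 * C :=
            mul_le_mul hball.le (hhb x) (abs_nonneg _) zero_le_one
        _ = C := one_mul C
    have hb1 : (l₀ - l) * h x ≤ C := by
      have := neg_abs_le ((l - l₀) * h x)
      nlinarith [habs]
    have hb2 : (l - l₀) * h x ≤ C := le_trans (le_abs_self _) habs
    have e1 : Real.exp (1 - (D₀ x + l * h x)) ≤ Real.exp C * Real.exp (1 - (D₀ x + l₀ * h x)) := by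
      rw [← Real.exp_add]
      apply Real.exp_le_exp.mpr
      nlinarith [hb1]
    have e2 : Real.exp (D₀ x + l * h x) ≤ Real.exp C * Real.exp (D₀ x + l₀ * h x) := by
      rw [← Real.exp_add]
      apply Real.exp_le_exp.mpr
      nlinarith [hb2]
    nlinarith [mul_le_mul_of_nonneg_left e1 hpx, mul_le_mul_of_nonneg_left e2 hqx]
  -- pointwise derivatives
  have hderiv1 : ∀ (l : ℝ) (x : α), HasDerivAt
      (fun l => p x * Real.exp (1 - (D₀ x + l * h x)) + q x * Real.exp (D₀ x + l * h x))
      (h x * (q x * Real.exp (D₀ x + l * h x) - p x * Real.exp (1 - (D₀ x + l * h x)))) l := by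
    intro l x
    have h0 : HasDerivAt (fun l : ℝ => D₀ x + l * h x) (h x) l := by
      simpa using ((hasDerivAt_id l).mul_const (h x)).const_add (D₀ x)
    have h1 : HasDerivAt (fun l : ℝ => 1 - (D₀ x + l * h x)) (-(h x)) l := h0.const_sub 1
    have h2 := (h1.exp).const_mul (p x)
    have h3 := (h0.exp).const_mul (q x)
    refine (h2.add h3).congr_deriv ?_
    ring
  have hderiv2 : ∀ (l : ℝ) (x : α), HasDerivAt
      (fun l => h x * (q x * Real.exp (D₀ x + l * h x) - p x * Real.exp (1 - (D₀ x + l * h x))))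
      (h x ^ 2 * (p x * Real.exp (1 - (D₀ x + l * h x)) + q x * Real.exp (D₀ x + l * h x))) l := by
    intro l x
    have h0 : HasDerivAt (fun l : ℝ => D₀ x + l * h x) (h x) l := by
      simpa using ((hasDerivAt_id l).mul_const (h x)).const_add (D₀ x)
    have h1 : HasDerivAt (fun l : ℝ => 1 - (D₀ x + l * h x)) (-(h x)) l := h0.const_sub 1
    have h2 := (((h0.exp).const_mul (q x)).sub ((h1.exp).const_mul (p x))).const_mul (h x)
    refine h2.congr_deriv ?_
    ring
  -- first differentiation under the integral sign
  have main1 : ∀ l₀ : ℝ,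
      Integrable (fun x => h x * (q x * Real.exp (D₀ x + l₀ * h x)
        - p x * Real.exp (1 - (D₀ x + l₀ * h x)))) μ ∧
      HasDerivAt (fun l => ∫ x, p x * Real.exp (1 - (D₀ x + l * h x)) +
        q x * Real.exp (D₀ x + l * h x) ∂μ)
        (∫ x, h x * (q x * Real.exp (D₀ x + l₀ * h x)
          - p x * Real.exp (1 - (D₀ x + l₀ * h x))) ∂μ) l₀ := by
    intro l₀
    refine hasDerivAt_integral_of_dominated_loc_of_deriv_le
      (bound := fun x => (C * Real.exp C) *
        (p x * Real.exp (1 - (D₀ x + l₀ * h x)) + q x * Real.exp (D₀ x + l₀ * h x)))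
      (F' := fun l x => h x * (q x * Real.exp (D₀ x + l * h x)
        - p x * Real.exp (1 - (D₀ x + l * h x))))
      (Metric.ball_mem_nhds l₀ one_pos) (Filter.Eventually.of_forall fun l => hfmeas l) (hint l₀) (hf1meas l₀)
      ?_ ((hint l₀).const_mul _) (Filter.Eventually.of_forall fun x l _ => hderiv1 l x)
    filter_upwards [hp0, hq0] with x hpx hqx
    intro l hl
    rw [Real.norm_eq_abs, abs_mul]
    have tri : |q x * Real.exp (D₀ x + l * h x) - p x * Real.exp (1 - (D₀ x + l * h x))| ≤
        p x * Real.exp (1 - (D₀ x + l * h x)) + q x * Real.exp (D₀ x + l * h x) := by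
      have := abs_sub (q x * Real.exp (D₀ x + l * h x)) (p x * Real.exp (1 - (D₀ x + l * h x)))
      rw [abs_of_nonneg (mul_nonneg hqx.le (Real.exp_pos _).le),
        abs_of_nonneg (mul_nonneg hpx.le (Real.exp_pos _).le)] at this
      linarith
    calc |h x| * |q x * Real.exp (D₀ x + l * h x) - p x * Real.exp (1 - (D₀ x + l * h x))|
        ≤ C * (p x * Real.exp (1 - (D₀ x + l * h x)) + q x * Real.exp (D₀ x + l * h x)) :=
          mul_le_mul (hhb x) tri (abs_nonneg _) C0
      _ ≤ C * (Real.exp C * (p x * Real.exp (1 - (D₀ x + l₀ * h x)) +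
            q x * Real.exp (D₀ x + l₀ * h x))) :=
          mul_le_mul_of_nonneg_left (hdom l₀ l hl x hpx.le hqx.le) C0
      _ = (C * Real.exp C) * (p x * Real.exp (1 - (D₀ x + l₀ * h x)) +
            q x * Real.exp (D₀ x + l₀ * h x)) := by ring
  -- second differentiation under the integral sign
  have main2 : ∀ l₀ : ℝ,
      Integrable (fun x => h x ^ 2 * (p x * Real.exp (1 - (D₀ x + l₀ * h x)) +
        q x * Real.exp (D₀ x + l₀ * h x))) μ ∧
      HasDerivAt (fun l => ∫ x, h x * (q x * Real.exp (D₀ x + l * h x)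
          - p x * Real.exp (1 - (D₀ x + l * h x))) ∂μ)
        (∫ x, h x ^ 2 * (p x * Real.exp (1 - (D₀ x + l₀ * h x)) +
          q x * Real.exp (D₀ x + l₀ * h x)) ∂μ) l₀ := by
    intro l₀
    refine hasDerivAt_integral_of_dominated_loc_of_deriv_le
      (bound := fun x => (C ^ 2 * Real.exp C) *
        (p x * Real.exp (1 - (D₀ x + l₀ * h x)) + q x * Real.exp (D₀ x + l₀ * h x)))
      (F' := fun l x => h x ^ 2 * (p x * Real.exp (1 - (D₀ x + l * h x)) +
        q x * Real.exp (D₀ x + l * h x)))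
      (Metric.ball_mem_nhds l₀ one_pos) (Filter.Eventually.of_forall fun l => hf1meas l) ((main1 l₀).1) (hf2meas l₀)
      ?_ ((hint l₀).const_mul _) (Filter.Eventually.of_forall fun x l _ => hderiv2 l x)
    filter_upwards [hp0, hq0] with x hpx hqx
    intro l hl
    rw [Real.norm_eq_abs, abs_mul]
    have hsq : |h x ^ 2| ≤ C ^ 2 := by
      rw [abs_pow]
      exact pow_le_pow_left₀ (abs_nonneg _) (hhb x) 2
    have hfnn : 0 ≤ p x * Real.exp (1 - (D₀ x + l * h x)) + q x * Real.exp (D₀ x + l * h x) :=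
      add_nonneg (mul_nonneg hpx.le (Real.exp_pos _).le) (mul_nonneg hqx.le (Real.exp_pos _).le)
    calc |h x ^ 2| * |p x * Real.exp (1 - (D₀ x + l * h x)) + q x * Real.exp (D₀ x + l * h x)|
        = |h x ^ 2| * (p x * Real.exp (1 - (D₀ x + l * h x)) +
            q x * Real.exp (D₀ x + l * h x)) := by
          rw [abs_of_nonneg hfnn]
      _ ≤ C ^ 2 * (p x * Real.exp (1 - (D₀ x + l * h x)) +
            q x * Real.exp (D₀ x + l * h x)) :=
          mul_le_mul_of_nonneg_right hsq hfnn
      _ ≤ C ^ 2 * (Real.exp C * (p x * Real.exp (1 - (D₀ x + l₀ * h x)) +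
            q x * Real.exp (D₀ x + l₀ * h x))) :=
          mul_le_mul_of_nonneg_left (hdom l₀ l hl x hpx.le hqx.le) (by positivity)
      _ = (C ^ 2 * Real.exp C) * (p x * Real.exp (1 - (D₀ x + l₀ * h x)) +
            q x * Real.exp (D₀ x + l₀ * h x)) := by ring
  have hderivF : ∀ l : ℝ, deriv (fun l => ∫ x, p x * Real.exp (1 - (D₀ x + l * h x)) +
      q x * Real.exp (D₀ x + l * h x) ∂μ) l =
      ∫ x, h x * (q x * Real.exp (D₀ x + l * h x)
        - p x * Real.exp (1 - (D₀ x + l * h x))) ∂μ := fun l => (main1 l).2.deriv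
  refine ⟨?_, ?_, ?_⟩
  · -- F'(0) = 0
    rw [hderivF 0]
    apply integral_eq_zero_of_ae
    filter_upwards [key] with x hx
    simp only [zero_mul, add_zero, Pi.zero_apply]
    rw [show q x * Real.exp (D₀ x) - p x * Real.exp (1 - D₀ x) = 0 by linarith, mul_zero]
  · -- F'' ≥ 0
    intro l
    have heq : deriv (fun l => ∫ x, p x * Real.exp (1 - (D₀ x + l * h x)) +
        q x * Real.exp (D₀ x + l * h x) ∂μ) =
        fun l => ∫ x, h x * (q x * Real.exp (D₀ x + l * h x)
          - p x * Real.exp (1 - (D₀ x + l * h x))) ∂μ := funext hderivF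
    rw [heq, (main2 l).2.deriv]
    apply integral_nonneg_of_ae
    filter_upwards [hp0, hq0] with x hpx hqx
    positivity
  · -- global minimum
    intro l
    apply integral_mono_ae (hint 0) (hint l)
    filter_upwards [key, hp0, hq0] with x hx hpx hqx
    simp only [zero_mul, add_zero]
    have e1 : Real.exp (1 - (D₀ x + l * h x)) = Real.exp (1 - D₀ x) * Real.exp (-(l * h x)) := by
      rw [← Real.exp_add]; ring_nf
    have e2 : Real.exp (D₀ x + l * h x) = Real.exp (D₀ x) * Real.exp (l * h x) := by
      rw [← Real.exp_add]
    rw [e1, e2]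
    set t := l * h x
    have h2 : 2 ≤ Real.exp (-t) + Real.exp t := by
      rw [Real.exp_neg]
      nlinarith [Real.exp_pos t, sq_nonneg (Real.exp t - 1),
        mul_inv_cancel₀ (ne_of_gt (Real.exp_pos t))]
    have ha : 0 ≤ p x * Real.exp (1 - D₀ x) := by positivity
    have hq' : q x * Real.exp (D₀ x) = p x * Real.exp (1 - D₀ x) := hx.symm
    rw [show p x * (Real.exp (1 - D₀ x) * Real.exp (-t)) =
        p x * Real.exp (1 - D₀ x) * Real.exp (-t) from by ring,
      show q x * (Real.exp (D₀ x) * Real.exp t) =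
        q x * Real.exp (D₀ x) * Real.exp t from by ring, hq']
    nlinarith [mul_le_mul_of_nonneg_left h2 ha]
end
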